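/- Let k ≥ 2 be an integer, r ∈ ℝ \ {0, 1}, and let U ⊆ ℂ \ {0, −1/r} be open. Suppose w : U → ℂ \ {0} is holomorphic and satisfies w(z)^{k+1} = z(z−r)/(rz+1) for all z ∈ U. Define F(z) = (k+1)(z−r)(2rz² − ((k+1)r² − 2(k+2)r + k)z + r) / ((k+2) r z w(z)). Then F is differentiable on U and for every z ∈ U: w(z)^k (z+1)²/z³ + F′(z) = (a₀(r) + a₁ r z)/((k+2) r w(z)), where a₀(r) = −(k+1)(k+2)r² + 2k(k+2)r − k(k−1) and a₁ = 2(2k+1). -/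

import Mathlib

open Real MeasureTheory Set intervalIntegral Filter

noncomputable def Wfn (k : ℕ) (r t : ℝ) : ℝ :=
  (t * (t + r ^ 2) / (1 - t)) ^ ((1 : ℝ) / ((k : ℝ) + 1))

noncomputable def a₀ (k : ℕ) (r : ℝ) : ℝ :=
  -((k : ℝ) + 1) * ((k : ℝ) + 2) * r ^ 2 + 2 * (k : ℝ) * ((k : ℝ) + 2) * r - (k : ℝ) * ((k : ℝ) - 1)

noncomputable def a₁ (k : ℕ) : ℝ := 2 * (2 * (k : ℝ) + 1)

noncomputable def periodP (k : ℕ) (r : ℝ) : ℝ :=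
  |r| ^ (-(2 * (k : ℝ)) / ((k : ℝ) + 1)) *
    ∫ t in (0 : ℝ)..1, (a₀ k r - a₁ k * t) / Wfn k r t

noncomputable def Ffn (k : ℕ) (r : ℝ) (w : ℂ → ℂ) (z : ℂ) : ℂ :=
  ((k : ℂ) + 1) * (z - (r : ℂ)) *
      (2 * (r : ℂ) * z ^ 2 -
        (((k : ℂ) + 1) * (r : ℂ) ^ 2 - 2 * ((k : ℂ) + 2) * (r : ℂ) + (k : ℂ)) * z + (r : ℂ)) /
    (((k : ℂ) + 2) * (r : ℂ) * z * w z)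

set_option maxHeartbeats 1600000 in
theorem exact_form_key (k : ℕ) (r : ℝ) (hr0 : r ≠ 0)
    (U : Set ℂ) (hU : IsOpen U) (hU0 : ∀ z ∈ U, z ≠ 0) (hU1 : ∀ z ∈ U, z ≠ -1 / (r : ℂ))
    (w : ℂ → ℂ) (hw : DifferentiableOn ℂ w U) (hwne : ∀ z ∈ U, w z ≠ 0)
    (hweq : ∀ z ∈ U, w z ^ (k + 1) = z * (z - (r : ℂ)) / ((r : ℂ) * z + 1))
    (z : ℂ) (hz : z ∈ U) :
    HasDerivAt (Ffn k r w) (deriv (Ffn k r w) z) z ∧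
      w z ^ k * (z + 1) ^ 2 / z ^ 3 + deriv (Ffn k r w) z =
        ((a₀ k r : ℂ) + (a₁ k : ℂ) * (r : ℂ) * z) / (((k : ℂ) + 2) * (r : ℂ) * w z) := by
  have hR : (r : ℂ) ≠ 0 := Complex.ofReal_ne_zero.2 hr0
  have hK1 : ((k : ℂ) + 1) ≠ 0 := by
    have h : ((k : ℂ) + 1) = ((k + 1 : ℕ) : ℂ) := by push_cast; ring
    rw [h]; exact_mod_cast Nat.succ_ne_zero k
  have hK2 : ((k : ℂ) + 2) ≠ 0 := by
    have h : ((k : ℂ) + 2) = ((k + 2 : ℕ) : ℂ) := by push_cast; ring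
    rw [h]; exact_mod_cast Nat.succ_ne_zero (k + 1)
  have hz0 := hU0 z hz
  have hW := hwne z hz
  have hq : (r : ℂ) * z + 1 ≠ 0 := by
    intro h
    exact hU1 z hz (by field_simp; linear_combination h)
  have hzr : z - (r : ℂ) ≠ 0 := by
    intro h
    apply hW
    have h2 : w z ^ (k + 1) = 0 := by rw [hweq z hz, h]; simp
    exact pow_eq_zero_iff (Nat.succ_ne_zero k) |>.1 h2
  have hdw : HasDerivAt w (deriv w z) z :=
    (hw.differentiableAt (hU.mem_nhds hz)).hasDerivAt
  set d := deriv w z with hd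
  have hWk : w z ^ k = z * (z - (r : ℂ)) / (((r : ℂ) * z + 1) * w z) := by
    have h := hweq z hz
    rw [pow_succ] at h
    field_simp at h ⊢
    linear_combination h
  have hf : HasDerivAt (fun y : ℂ => y * (y - (r : ℂ)) / ((r : ℂ) * y + 1))
      (((1 * (z - (r : ℂ)) + z * 1) * ((r : ℂ) * z + 1) - z * (z - (r : ℂ)) * ((r : ℂ) * 1)) /
        ((r : ℂ) * z + 1) ^ 2) z :=
    (((hasDerivAt_id z).mul ((hasDerivAt_id z).sub_const _)).div
      (((hasDerivAt_id z).const_mul _).add_const _) hq)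
  have hf' : HasDerivAt (fun y : ℂ => w y ^ (k + 1))
      (((1 * (z - (r : ℂ)) + z * 1) * ((r : ℂ) * z + 1) - z * (z - (r : ℂ)) * ((r : ℂ) * 1)) /
        ((r : ℂ) * z + 1) ^ 2) z := by
    apply hf.congr_of_eventuallyEq
    filter_upwards [hU.mem_nhds hz] with y hy
    exact (hweq y hy)
  have hpow : HasDerivAt (fun y : ℂ => w y ^ (k + 1))
      (((k : ℂ) + 1) * w z ^ k * d) z := by
    have := hdw.fun_pow (k + 1)
    simpa [Nat.add_sub_cancel, Nat.cast_add] using this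
  have huniq := hpow.unique hf'
  rw [hWk] at huniq
  field_simp at huniq
  have hd_eq : d = ((r : ℂ) * z ^ 2 + 2 * z - (r : ℂ)) * w z /
      ((((k : ℂ) + 1) * z * (z - (r : ℂ))) * ((r : ℂ) * z + 1)) := by
    have h2 : ((r : ℂ) * z + 1) * (d * ((((k : ℂ) + 1) * z * (z - (r : ℂ))) * ((r : ℂ) * z + 1)))
        = ((r : ℂ) * z + 1) * ((((r : ℂ) * z ^ 2 + 2 * z - (r : ℂ)) * w z)) := by
      have hq' : z * (r : ℂ) + 1 ≠ 0 := by rw [mul_comm]; exact hq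
      rw [div_eq_div_iff hq' (pow_ne_zero 2 hq')] at huniq
      linear_combination huniq
    have h3 := mul_left_cancel₀ hq h2
    field_simp
    linear_combination h3
  set B : ℂ := ((k : ℂ) + 1) * (r : ℂ) ^ 2 - 2 * ((k : ℂ) + 2) * (r : ℂ) + (k : ℂ) with hB
  have hden : ((k : ℂ) + 2) * (r : ℂ) * z * w z ≠ 0 :=
    mul_ne_zero (mul_ne_zero (mul_ne_zero hK2 hR) hz0) hW
  have hnum : HasDerivAt (fun y : ℂ => ((k : ℂ) + 1) * (y - (r : ℂ)) *
      (2 * (r : ℂ) * y ^ 2 - B * y + (r : ℂ)))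
      (((k : ℂ) + 1) * (2 * (r : ℂ) * z ^ 2 - B * z + (r : ℂ)) +
        ((k : ℂ) + 1) * (z - (r : ℂ)) * (4 * (r : ℂ) * z - B)) z := by
    have h := (((hasDerivAt_id z).sub_const (r : ℂ)).const_mul ((k : ℂ) + 1)).fun_mul
      ((((hasDerivAt_pow 2 z).const_mul (2 * (r : ℂ))).fun_sub
        ((hasDerivAt_id z).const_mul B)).add_const (r : ℂ))
    simp only [id_eq] at h
    refine h.congr_deriv ?_
    push_cast
    ring
  have hdenD : HasDerivAt (fun y : ℂ => ((k : ℂ) + 2) * (r : ℂ) * y * w y)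
      ((((k : ℂ) + 2) * (r : ℂ)) * w z + (((k : ℂ) + 2) * (r : ℂ) * z) * d) z := by
    have h := ((hasDerivAt_id z).const_mul (((k : ℂ) + 2) * (r : ℂ))).fun_mul hdw
    simp only [id_eq] at h
    refine h.congr_deriv ?_
    ring
  have hF : HasDerivAt (Ffn k r w)
      (((((k : ℂ) + 1) * (2 * (r : ℂ) * z ^ 2 - B * z + (r : ℂ)) +
          ((k : ℂ) + 1) * (z - (r : ℂ)) * (4 * (r : ℂ) * z - B)) *
            (((k : ℂ) + 2) * (r : ℂ) * z * w z) -
        (((k : ℂ) + 1) * (z - (r : ℂ)) * (2 * (r : ℂ) * z ^ 2 - B * z + (r : ℂ))) *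
          ((((k : ℂ) + 2) * (r : ℂ)) * w z + (((k : ℂ) + 2) * (r : ℂ) * z) * d)) /
        (((k : ℂ) + 2) * (r : ℂ) * z * w z) ^ 2) z := hnum.div hdenD hden
  refine ⟨hF.differentiableAt.hasDerivAt, ?_⟩
  -- combine the denominator-derivative into a single fraction
  have hD'eq : (((k : ℂ) + 2) * (r : ℂ)) * w z + (((k : ℂ) + 2) * (r : ℂ) * z) * d
      = (((k : ℂ) + 2) * (r : ℂ) * w z) *
          ((((k : ℂ) + 1) * (z - (r : ℂ)) * ((r : ℂ) * z + 1) +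
            ((r : ℂ) * z ^ 2 + 2 * z - (r : ℂ))) /
          (((k : ℂ) + 1) * (z - (r : ℂ)) * ((r : ℂ) * z + 1))) := by
    rw [hd_eq]
    field_simp
  have hS : ((k : ℂ) + 1) * (z - (r : ℂ)) * ((r : ℂ) * z + 1) ≠ 0 :=
    mul_ne_zero (mul_ne_zero hK1 hzr) hq
  have hD1 : ((r : ℂ) * z + 1) * w z * z ^ 3 ≠ 0 :=
    mul_ne_zero (mul_ne_zero hq hW) (pow_ne_zero 3 hz0)
  have hD2 : ((k : ℂ) + 1) * (z - (r : ℂ)) * ((r : ℂ) * z + 1) *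
      (((k : ℂ) + 2) * (r : ℂ) * z * w z) ^ 2 ≠ 0 :=
    mul_ne_zero hS (pow_ne_zero 2 hden)
  rw [hF.deriv, hWk, hD'eq, hB]
  simp only [a₀, a₁]
  push_cast
  rw [div_mul_eq_mul_div, div_div,
    ← mul_div_assoc, ← mul_div_assoc, sub_div' hS, div_div,
    div_add_div _ _ hD1 hD2, div_eq_div_iff (mul_ne_zero hD1 hD2)
      (mul_ne_zero (mul_ne_zero hK2 hR) hW)]
  ring

/-- the exact-form reduction for `g²η`. -/
theorem exact_form_reduction (k : ℕ) (hk : 2 ≤ k) (r : ℝ) (hr0 : r ≠ 0) (hr1 : r ≠ 1)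
    (U : Set ℂ) (hU : IsOpen U) (hU0 : ∀ z ∈ U, z ≠ 0) (hU1 : ∀ z ∈ U, z ≠ -1 / (r : ℂ))
    (w : ℂ → ℂ) (hw : DifferentiableOn ℂ w U) (hwne : ∀ z ∈ U, w z ≠ 0)
    (hweq : ∀ z ∈ U, w z ^ (k + 1) = z * (z - (r : ℂ)) / ((r : ℂ) * z + 1)) :
    DifferentiableOn ℂ (Ffn k r w) U ∧
    ∀ z ∈ U,
      w z ^ k * (z + 1) ^ 2 / z ^ 3 + deriv (Ffn k r w) z =
        ((a₀ k r : ℂ) + (a₁ k : ℂ) * (r : ℂ) * z) / (((k : ℂ) + 2) * (r : ℂ) * w z) := by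
  constructor
  · exact fun z hz =>
      ((exact_form_key k r hr0 U hU hU0 hU1 w hw hwne hweq z hz).1).differentiableAt.differentiableWithinAt
  · exact fun z hz => (exact_form_key k r hr0 U hU hU0 hU1 w hw hwne hweq z hz).2
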